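/- Let W be a block positive Hermitian matrix on ℂ^m⊗ℂ^m and λ > 0 such that A_{kl}^{(W)}(ψ) ≥ −λ for every unit vector ψ, every Schmidt decomposition of ψ, and all k ≠ l. Let ρ be a density matrix on ℂ^m⊗ℂ^m with Tr(ρW) < 0. Then for every pure-state decomposition ρ = Σ_i p_i |ψ_i⟩⟨ψ_i| one has Σ_i p_i C(ψ_i) ≥ √(2/(m(m−1))) · |Tr(ρW)| / λ; consequently every entanglement witness detecting ρ provides the concurrence bound C(ρ) ≥ √(2/(m(m−1))) · |Tr(ρW)| / λ. -/

import Mathlib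

open scoped BigOperators ComplexConjugate ComplexOrder
open Finset Matrix

noncomputable section

/-- Tensor product `a⊗b` of two vectors, `(a⊗b)(x,y) = aₓ·b_y`. -/
def tp {m n : ℕ} (a : Fin m → ℂ) (b : Fin n → ℂ) : Fin m × Fin n → ℂ :=
  fun p => a p.1 * b p.2

/-- The standard Hermitian inner product `⟨f,g⟩ = ∑ i, conj (f i) * g i`. -/
def hip {ι : Type} [Fintype ι] (f g : ι → ℂ) : ℂ := ∑ i, conj (f i) * g i

/-- An orthonormal family of vectors. -/
def Onb {m r : ℕ} (a : Fin r → Fin m → ℂ) : Prop :=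
  ∀ i j, hip (a i) (a j) = if i = j then 1 else 0

/-- `IsSchmidt ψ a b μ` : `ψ = ∑ i, √μᵢ aᵢ⊗bᵢ` is a Schmidt decomposition of `ψ`. -/
def IsSchmidt {m : ℕ} (ψ : Fin m × Fin m → ℂ)
    (a b : Fin m → Fin m → ℂ) (μ : Fin m → ℝ) : Prop :=
  Onb a ∧ Onb b ∧ (∀ i, 0 ≤ μ i) ∧ ∑ i, μ i = 1 ∧
  ψ = fun p => ∑ i, (Real.sqrt (μ i) : ℂ) * tp (a i) (b i) p

/-- `A_{kl}^{(W)}(ψ) = Re⟨a_k⊗b_k, W(a_l⊗b_l)⟩`. -/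
def Acoef {m : ℕ} (W : Matrix (Fin m × Fin m) (Fin m × Fin m) ℂ)
    (a b : Fin m → Fin m → ℂ) (k l : Fin m) : ℝ :=
  (hip (tp (a k) (b k)) (W.mulVec (tp (a l) (b l)))).re

/-- Block positivity: `⟨a⊗b, W(a⊗b)⟩ ≥ 0` for all `a`, `b`. -/
def BlockPos {m : ℕ} (W : Matrix (Fin m × Fin m) (Fin m × Fin m) ℂ) : Prop :=
  ∀ a b : Fin m → ℂ, 0 ≤ (hip (tp a b) (W.mulVec (tp a b))).re

/-- The reduced matrix `ρ_A` of a vector `ψ`. -/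
def rhoA {m n : ℕ} (ψ : Fin m × Fin n → ℂ) : Matrix (Fin m) (Fin m) ℂ :=
  Matrix.of fun x y => ∑ z, ψ (x, z) * conj (ψ (y, z))

/-- Concurrence of a pure state: `C(ψ) = √(2(1 − Tr ρ_A²))`. -/
def concP {m n : ℕ} (ψ : Fin m × Fin n → ℂ) : ℝ :=
  Real.sqrt (2 * (1 - (Matrix.trace (rhoA ψ * rhoA ψ)).re))

/-- Convex-roof concurrence of a mixed state. -/
def concM {m n : ℕ} (ρ : Matrix (Fin m × Fin n) (Fin m × Fin n) ℂ) : ℝ :=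
  sInf { c : ℝ | ∃ (N : ℕ) (p : Fin N → ℝ) (ψ : Fin N → (Fin m × Fin n → ℂ)),
    (∀ i, 0 < p i) ∧ ∑ i, p i = 1 ∧ (∀ i, hip (ψ i) (ψ i) = 1) ∧
    ρ = ∑ i, (p i : ℂ) • Matrix.of (fun x y => ψ i x * conj (ψ i y)) ∧
    c = ∑ i, p i * concP (ψ i) }


/-!
For a unit vector `ψ = ∑ₖ √μₖ aₖ⊗bₖ`, the expectation `⟨ψ, Wψ⟩` expands as
`∑ₖₗ √(μₖ μₗ) A_{kl}`. Block positivity makes the diagonal terms nonnegative and the hypothesis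
bounds each off-diagonal one below by `-λ √(μₖ μₗ)`. By Cauchy–Schwarz over the `m(m-1)`
off-diagonal pairs, `∑_{k≠l} √(μₖ μₗ) ≤ √(m(m-1)) √(1 - ∑ μₖ²) = √(m(m-1)/2) C(ψ)`, because
`∑_{k≠l} μₖ μₗ = (∑ μₖ)² - ∑ μₖ²`. Averaging over a pure-state decomposition of `ρ` gives the
first claim. For the second, the spectral decomposition of `ρ` is a pure-state decomposition, so
the infimum is not taken over the empty set (where `sInf` would be the junk value `0`).

The Schmidt decomposition comes from an eigenbasis `aₖ` of `ρ_A`: the partial contractions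
`cₖ = ⟨aₖ ⊗ 1, ψ⟩` satisfy `⟨cₖ, cₗ⟩ = ⟨aₗ, ρ_A aₖ⟩ = μₖ δₖₗ`, so normalising the nonzero ones
and completing them to an orthonormal basis gives `bₖ` with `cₖ = √μₖ bₖ`.
-/

open scoped InnerProductSpace

lemma hip_eq_star_dotProduct {ι : Type} [Fintype ι] (f g : ι → ℂ) : hip f g = star f ⬝ᵥ g :=
  rfl

lemma hip_eq_inner {ι : Type} [Fintype ι] (f g : ι → ℂ) :
    hip f g = ⟪WithLp.toLp 2 f, WithLp.toLp 2 g⟫_ℂ := by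
  rw [EuclideanSpace.inner_toLp_toLp, dotProduct_comm, hip_eq_star_dotProduct]

lemma onb_iff_orthonormal {m r : ℕ} (a : Fin r → Fin m → ℂ) :
    Onb a ↔ Orthonormal ℂ (fun k => WithLp.toLp 2 (a k)) := by
  simp only [Onb, orthonormal_iff_ite, hip_eq_inner]

lemma hip_vecMul_vecMul {ι κ : Type} [Fintype ι] [Fintype κ] (M : Matrix ι κ ℂ) (u v : ι → ℂ) :
    hip (star u ᵥ* M) (star v ᵥ* M) = hip v ((M * Mᴴ) *ᵥ u) := by
  rw [hip_eq_star_dotProduct, hip_eq_star_dotProduct, star_vecMul, star_star, dotProduct_comm,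
    dotProduct_mulVec, ← mulVec_mulVec, dotProduct_mulVec, dotProduct_mulVec]

lemma trace_vecMulVec_star_mul {ι : Type} [Fintype ι] (f : ι → ℂ) (W : Matrix ι ι ℂ) :
    trace (Matrix.of (fun x y => f x * conj (f y)) * W) = hip f (W *ᵥ f) := by
  rw [show Matrix.of (fun x y => f x * conj (f y)) = vecMulVec f (star f) from rfl,
    vecMulVec_mul, trace_vecMulVec, dotProduct_comm, ← dotProduct_mulVec, hip_eq_star_dotProduct]

namespace Matrix.IsHermitian

variable {𝕜 : Type*} [RCLike 𝕜] {n : Type*} [Fintype n] [DecidableEq n] {A : Matrix n n 𝕜}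

theorem eq_sum_eigenvalues_smul_vecMulVec (hA : A.IsHermitian) :
    A = ∑ k, (hA.eigenvalues k : 𝕜) •
      vecMulVec ⇑(hA.eigenvectorBasis k) (star ⇑(hA.eigenvectorBasis k)) := by
  ext x y
  conv_lhs => rw [hA.spectral_theorem, Unitary.conjStarAlgAut_apply]
  rw [mul_apply]
  simp only [mul_diagonal, star_apply, eigenvectorUnitary_apply, sum_apply, smul_apply,
    vecMulVec_apply, Pi.star_apply, Function.comp_apply, smul_eq_mul, RCLike.star_def]
  exact Finset.sum_congr rfl fun k _ => by ring

theorem trace_mul_self_eq_sum_sq_eigenvalues (hA : A.IsHermitian) :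
    (A * A).trace = ∑ k, (hA.eigenvalues k : 𝕜) ^ 2 := by
  have hunit : ∀ k, ⇑(hA.eigenvectorBasis k) ⬝ᵥ star ⇑(hA.eigenvectorBasis k) = 1 := fun k => by
    rw [← EuclideanSpace.inner_eq_star_dotProduct, hA.eigenvectorBasis.inner_eq_one]
  nth_rewrite 2 [hA.eq_sum_eigenvalues_smul_vecMulVec]
  simp only [Matrix.mul_sum, Matrix.mul_smul, mul_vecMulVec, hA.mulVec_eigenvectorBasis,
    trace_sum, trace_smul, trace_vecMulVec, smul_dotProduct, hunit, RCLike.real_smul_eq_coe_mul,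
    smul_eq_mul, mul_one, sq]

end Matrix.IsHermitian

theorem exists_onb_smul_eq_of_hip_eq {m : ℕ} (c : Fin m → Fin m → ℂ) (μ : Fin m → ℝ)
    (hc : ∀ k l, hip (c k) (c l) = if k = l then (μ k : ℂ) else 0) :
    ∃ b : Fin m → Fin m → ℂ, Onb b ∧ ∀ k, (√(μ k) : ℂ) • b k = c k := by
  have hμ : ∀ k, (√(μ k) : ℂ) * √(μ k) = μ k := fun k => by
    have hnn := inner_self_nonneg (𝕜 := ℂ) (x := WithLp.toLp 2 (c k))
    rw [← hip_eq_inner, hc, if_pos rfl, RCLike.re_to_complex, Complex.ofReal_re] at hnn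
    exact_mod_cast Real.mul_self_sqrt hnn
  have hsqrt : ∀ k, μ k ≠ 0 → (√(μ k) : ℂ) ≠ 0 := fun k hk =>
    left_ne_zero_of_mul (a := (√(μ k) : ℂ)) (b := √(μ k)) (by rw [hμ]; exact_mod_cast hk)
  set v : Fin m → EuclideanSpace ℂ (Fin m) := fun k => WithLp.toLp 2 ((√(μ k) : ℂ)⁻¹ • c k)
  have hv : Orthonormal ℂ ({k | μ k ≠ 0}.domRestrict v) := by
    rw [orthonormal_iff_ite]
    rintro ⟨k, hk⟩ ⟨l, hl⟩
    simp only [Set.domRestrict_apply, v, WithLp.toLp_smul, inner_smul_left, inner_smul_right,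
      ← hip_eq_inner, hc, Subtype.mk.injEq]
    split_ifs with h
    · subst h
      have hk' := hsqrt k hk
      rw [← hμ k, map_inv₀, Complex.conj_ofReal]
      field_simp
    · simp
  obtain ⟨B, hB⟩ := hv.exists_orthonormalBasis_extension_of_card_eq finrank_euclideanSpace
  refine ⟨fun k => WithLp.ofLp (B k), (onb_iff_orthonormal _).2 (by simp [B.orthonormal]),
    fun k => ?_⟩
  by_cases hk : μ k = 0
  · have h := hc k k
    rw [if_pos rfl, hk, hip_eq_inner, Complex.ofReal_zero, inner_self_eq_zero] at h
    simpa [hk] using (congrArg WithLp.ofLp h).symm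
  · show (√(μ k) : ℂ) • WithLp.ofLp (B k) = c k
    rw [hB k hk]
    simp [v, smul_smul, mul_inv_cancel₀ (hsqrt k hk)]

lemma rhoA_eq_mul_conjTranspose {m n : ℕ} (ψ : Fin m × Fin n → ℂ) :
    rhoA ψ = of (Function.curry ψ) * (of (Function.curry ψ))ᴴ := by
  ext x y
  simp [rhoA, mul_apply]

lemma trace_rhoA {m n : ℕ} (ψ : Fin m × Fin n → ℂ) : (rhoA ψ).trace = hip ψ ψ := by
  simp [rhoA, trace, hip, Fintype.sum_prod_type, mul_comm]

theorem exists_isSchmidt {m : ℕ} (ψ : Fin m × Fin m → ℂ) (hψ : hip ψ ψ = 1) :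
    ∃ a b μ, IsSchmidt ψ a b μ ∧ (trace (rhoA ψ * rhoA ψ)).re = ∑ k, μ k ^ 2 := by
  have hR : (rhoA ψ).PosSemidef := by
    rw [rhoA_eq_mul_conjTranspose]
    exact posSemidef_self_mul_conjTranspose _
  have hH : (rhoA ψ).IsHermitian := hR.isHermitian
  set e := hH.eigenvectorBasis
  set a : Fin m → Fin m → ℂ := fun k => WithLp.ofLp (e k)
  set c : Fin m → Fin m → ℂ := fun k => star (a k) ᵥ* of (Function.curry ψ)
  have ha : Onb a := (onb_iff_orthonormal a).2 (by simp [a, e.orthonormal])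
  have hc : ∀ k l, hip (c k) (c l) = if k = l then (hH.eigenvalues k : ℂ) else 0 := by
    intro k l
    rw [hip_vecMul_vecMul, ← rhoA_eq_mul_conjTranspose, hH.mulVec_eigenvectorBasis,
      hip_eq_star_dotProduct, dotProduct_smul, ← hip_eq_star_dotProduct, ha l k]
    split_ifs <;> simp_all [eq_comm]
  obtain ⟨b, hb, hbc⟩ := exists_onb_smul_eq_of_hip_eq c hH.eigenvalues hc
  have hsum : ∑ k, hH.eigenvalues k = 1 := by
    have h := hH.trace_eq_sum_eigenvalues
    rw [trace_rhoA, hψ] at h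
    simpa using congrArg Complex.re h.symm
  refine ⟨a, b, hH.eigenvalues, ⟨ha, hb, hR.eigenvalues_nonneg, hsum, ?_⟩, ?_⟩
  · funext ⟨x, z⟩
    have h := congrArg (fun w : EuclideanSpace ℂ (Fin m) => w x)
      (e.sum_repr' (WithLp.toLp 2 fun y => ψ (y, z)))
    simp only [WithLp.ofLp_sum, WithLp.ofLp_smul, Finset.sum_apply, Pi.smul_apply] at h
    rw [← h]
    refine Finset.sum_congr rfl fun k _ => ?_
    have hk : c k z = ⟪e k, WithLp.toLp 2 fun y => ψ (y, z)⟫_ℂ := by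
      simp [c, a, vecMul, dotProduct, EuclideanSpace.inner_eq_star_dotProduct, mul_comm]
    rw [← hk, ← hbc k]
    simp only [tp, a, Pi.smul_apply, smul_eq_mul]
    ring
  · rw [hH.trace_mul_self_eq_sum_sq_eigenvalues]
    simp [← Complex.ofReal_pow]

theorem IsSchmidt.re_hip_mulVec {m : ℕ} {W : Matrix (Fin m × Fin m) (Fin m × Fin m) ℂ}
    {ψ : Fin m × Fin m → ℂ} {a b : Fin m → Fin m → ℂ} {μ : Fin m → ℝ} (h : IsSchmidt ψ a b μ) :
    (hip ψ (W *ᵥ ψ)).re = ∑ k, ∑ l, √(μ k) * √(μ l) * Acoef W a b k l := by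
  have hψ : ψ = ∑ k, (√(μ k) : ℂ) • tp (a k) (b k) := by
    rw [h.2.2.2.2]
    funext p
    simp [Finset.sum_apply]
  rw [hψ, hip_eq_star_dotProduct]
  simp only [star_sum, star_smul, mulVec_sum, mulVec_smul, sum_dotProduct, dotProduct_sum,
    smul_dotProduct, dotProduct_smul, Finset.smul_sum, Complex.re_sum, Acoef,
    hip_eq_star_dotProduct]
  rw [Finset.sum_comm]
  refine Finset.sum_congr rfl fun k _ => Finset.sum_congr rfl fun l _ => ?_
  simp only [Complex.star_def, Complex.conj_ofReal, smul_eq_mul, Complex.re_ofReal_mul]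
  ring

theorem IsSchmidt.neg_re_hip_mulVec_le {m : ℕ}
    {W : Matrix (Fin m × Fin m) (Fin m × Fin m) ℂ} (hBP : BlockPos W) {lam : ℝ}
    {ψ : Fin m × Fin m → ℂ} {a b : Fin m → Fin m → ℂ} {μ : Fin m → ℝ} (h : IsSchmidt ψ a b μ)
    (hA : ∀ k l, k ≠ l → -lam ≤ Acoef W a b k l) :
    -(hip ψ (W *ᵥ ψ)).re ≤ lam * ∑ kl ∈ univ.offDiag, √(μ kl.1) * √(μ kl.2) := by
  rw [h.re_hip_mulVec, ← Finset.sum_product', ← Finset.diag_union_offDiag,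
    Finset.sum_union (Finset.disjoint_diag_offDiag _), Finset.sum_diag, Finset.mul_sum]
  have hdiag : 0 ≤ ∑ k, √(μ k) * √(μ k) * Acoef W a b k k :=
    Finset.sum_nonneg fun k _ => mul_nonneg (by positivity) (hBP _ _)
  have hoff : -∑ kl ∈ univ.offDiag, √(μ kl.1) * √(μ kl.2) * Acoef W a b kl.1 kl.2 ≤
      ∑ kl ∈ univ.offDiag, lam * (√(μ kl.1) * √(μ kl.2)) := by
    rw [← Finset.sum_neg_distrib]
    refine Finset.sum_le_sum fun kl hkl => ?_
    have := mul_le_mul_of_nonneg_left (hA _ _ (Finset.mem_offDiag.1 hkl).2.2)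
      (by positivity : 0 ≤ √(μ kl.1) * √(μ kl.2))
    linarith
  linarith

theorem sum_offDiag_sqrt_mul_sqrt_le {ι : Type*} [Fintype ι] [DecidableEq ι] {μ : ι → ℝ}
    (hμ : ∀ k, 0 ≤ μ k) (hsum : ∑ k, μ k = 1) :
    ∑ kl ∈ univ.offDiag, √(μ kl.1) * √(μ kl.2) ≤
      √(1 - ∑ k, μ k ^ 2) * √(#(univ : Finset ι).offDiag : ℝ) := by
  have hoff : ∑ kl ∈ univ.offDiag, μ kl.1 * μ kl.2 = 1 - ∑ k, μ k ^ 2 := by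
    have h := Finset.sum_mul_sum univ univ μ μ
    rw [hsum, one_mul, ← Finset.sum_product', ← Finset.diag_union_offDiag,
      Finset.sum_union (Finset.disjoint_diag_offDiag _), Finset.sum_diag] at h
    simp only [sq]
    linarith
  calc ∑ kl ∈ univ.offDiag, √(μ kl.1) * √(μ kl.2)
      = ∑ kl ∈ univ.offDiag, √(μ kl.1 * μ kl.2) * √1 := by
        simp [Real.sqrt_mul (hμ _)]
    _ ≤ _ := Real.sum_sqrt_mul_sqrt_le _ (fun kl => mul_nonneg (hμ kl.1) (hμ kl.2))
        fun _ => zero_le_one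
    _ = _ := by rw [hoff, Finset.sum_const, nsmul_one]

lemma card_offDiag_univ_fin (m : ℕ) : (#(univ : Finset (Fin m)).offDiag : ℝ) = m * (m - 1) := by
  rw [Finset.offDiag_card, Finset.card_univ, Fintype.card_fin, Nat.cast_sub (Nat.le_mul_self m)]
  push_cast
  ring

theorem sqrt_two_div_mul_neg_re_hip_mulVec_le_concP {m : ℕ}
    {W : Matrix (Fin m × Fin m) (Fin m × Fin m) ℂ} (hBP : BlockPos W) {lam : ℝ} (hlam : 0 ≤ lam)
    {ψ : Fin m × Fin m → ℂ} (hψ : hip ψ ψ = 1)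
    (hA : ∀ (a b : Fin m → Fin m → ℂ) (μ : Fin m → ℝ),
      IsSchmidt ψ a b μ → ∀ k l, k ≠ l → -lam ≤ Acoef W a b k l) :
    √(2 / (m * (m - 1))) * -(hip ψ (W *ᵥ ψ)).re ≤ lam * concP ψ := by
  obtain ⟨a, b, μ, hS, hpurity⟩ := exists_isSchmidt ψ hψ
  have hconc : concP ψ = √(1 - ∑ k, μ k ^ 2) * √2 := by
    rw [concP, hpurity, mul_comm, Real.sqrt_mul' _ zero_le_two]
  have hκ : √(2 / (m * (m - 1))) * √(m * (m - 1)) ≤ √2 := by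
    rw [← card_offDiag_univ_fin, ← Real.sqrt_mul' _ (Nat.cast_nonneg _)]
    refine Real.sqrt_le_sqrt ?_
    rcases eq_or_ne (#(univ : Finset (Fin m)).offDiag : ℝ) 0 with h | h
    · rw [h, mul_zero]
      exact zero_le_two
    · rw [div_mul_cancel₀ _ h]
  calc √(2 / (m * (m - 1))) * -(hip ψ (W *ᵥ ψ)).re
      ≤ √(2 / (m * (m - 1))) * (lam * (√(1 - ∑ k, μ k ^ 2) * √(m * (m - 1)))) := by
        refine mul_le_mul_of_nonneg_left ?_ (Real.sqrt_nonneg _)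
        refine (hS.neg_re_hip_mulVec_le hBP (hA a b μ hS)).trans ?_
        rw [← card_offDiag_univ_fin]
        exact mul_le_mul_of_nonneg_left (sum_offDiag_sqrt_mul_sqrt_le hS.2.2.1 hS.2.2.2.1) hlam
    _ = lam * √(1 - ∑ k, μ k ^ 2) * (√(2 / (m * (m - 1))) * √(m * (m - 1))) := by ring
    _ ≤ lam * √(1 - ∑ k, μ k ^ 2) * √2 := mul_le_mul_of_nonneg_left hκ (by positivity)
    _ = lam * concP ψ := by rw [hconc, mul_assoc]

theorem exists_pure_decomposition {ι : Type} [Fintype ι] [DecidableEq ι] {ρ : Matrix ι ι ℂ}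
    (hρ : ρ.PosSemidef) (htr : ρ.trace = 1) :
    ∃ (N : ℕ) (p : Fin N → ℝ) (ψ : Fin N → ι → ℂ),
      (∀ i, 0 < p i) ∧ ∑ i, p i = 1 ∧ (∀ i, hip (ψ i) (ψ i) = 1) ∧
      ρ = ∑ i, (p i : ℂ) • Matrix.of (fun x y => ψ i x * conj (ψ i y)) := by
  have hH : ρ.IsHermitian := hρ.isHermitian
  let e := Fintype.equivFin {k // hH.eigenvalues k ≠ 0}
  have reindex : ∀ {M : Type} [AddCommMonoid M] (g : ι → M),
      (∀ k, hH.eigenvalues k = 0 → g k = 0) → ∑ j, g (e.symm j) = ∑ k, g k := by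
    intro M _ g hg
    rw [Equiv.sum_comp e.symm (fun k => g k),
      ← Finset.sum_subtype (univ.filter fun k => hH.eigenvalues k ≠ 0) (by simp),
      Finset.sum_filter_of_ne fun k _ hk => mt (hg k) hk]
  refine ⟨_, fun j => hH.eigenvalues (e.symm j), fun j => ⇑(hH.eigenvectorBasis (e.symm j)),
    fun j => (hρ.eigenvalues_nonneg _).lt_of_ne' (e.symm j).2, ?_,
    fun j => (hip_eq_inner _ _).trans (hH.eigenvectorBasis.inner_eq_one _), ?_⟩
  · rw [reindex hH.eigenvalues fun _ => id]
    simpa using congrArg Complex.re (hH.trace_eq_sum_eigenvalues.symm.trans htr)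
  · rw [reindex (fun k => (hH.eigenvalues k : ℂ) • Matrix.of fun x y =>
      hH.eigenvectorBasis k x * conj (hH.eigenvectorBasis k y)) fun k hk => by simp [hk]]
    exact hH.eq_sum_eigenvalues_smul_vecMulVec

theorem le_concM {m n : ℕ}
    {ρ : Matrix (Fin m × Fin n) (Fin m × Fin n) ℂ} (hρ : ρ.PosSemidef) (htr : ρ.trace = 1) {c : ℝ}
    (h : ∀ (N : ℕ) (p : Fin N → ℝ) (ψ : Fin N → (Fin m × Fin n → ℂ)),
      (∀ i, 0 < p i) → ∑ i, p i = 1 → (∀ i, hip (ψ i) (ψ i) = 1) →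
      ρ = ∑ i, (p i : ℂ) • Matrix.of (fun x y => ψ i x * conj (ψ i y)) →
      c ≤ ∑ i, p i * concP (ψ i)) :
    c ≤ concM ρ := by
  obtain ⟨N, p, ψ, hp, hsum, hψ, hdec⟩ := exists_pure_decomposition hρ htr
  refine le_csInf ⟨_, N, p, ψ, hp, hsum, hψ, hdec, rfl⟩ ?_
  rintro _ ⟨N, p, ψ, hp, hsum, hψ, hdec, rfl⟩
  exact h N p ψ hp hsum hψ hdec

lemma trace_sum_smul_mul {ι : Type} [Fintype ι] {N : ℕ} (W : Matrix ι ι ℂ) (p : Fin N → ℝ)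
    (ψ : Fin N → ι → ℂ) :
    trace ((∑ i, (p i : ℂ) • Matrix.of (fun x y => ψ i x * conj (ψ i y))) * W) =
      ∑ i, (p i : ℂ) * hip (ψ i) (W *ᵥ ψ i) := by
  simp only [Matrix.sum_mul, Matrix.smul_mul, trace_sum, trace_smul, trace_vecMulVec_star_mul,
    smul_eq_mul]

theorem sqrt_two_div_mul_neg_re_trace_mul_le {m N : ℕ}
    {W : Matrix (Fin m × Fin m) (Fin m × Fin m) ℂ} (hBP : BlockPos W) {lam : ℝ} (hlam : 0 ≤ lam)
    (hA : ∀ (ψ : Fin m × Fin m → ℂ) (a b : Fin m → Fin m → ℂ) (μ : Fin m → ℝ),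
      hip ψ ψ = 1 → IsSchmidt ψ a b μ → ∀ k l, k ≠ l → -lam ≤ Acoef W a b k l)
    {p : Fin N → ℝ} {ψ : Fin N → (Fin m × Fin m → ℂ)} (hp : ∀ i, 0 ≤ p i)
    (hψ : ∀ i, hip (ψ i) (ψ i) = 1) :
    √(2 / (m * (m - 1))) *
        -(trace ((∑ i, (p i : ℂ) • Matrix.of (fun x y => ψ i x * conj (ψ i y))) * W)).re ≤
      lam * ∑ i, p i * concP (ψ i) := by
  rw [trace_sum_smul_mul, Complex.re_sum, ← Finset.sum_neg_distrib, Finset.mul_sum,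
    Finset.mul_sum]
  refine Finset.sum_le_sum fun i _ => ?_
  have h := sqrt_two_div_mul_neg_re_hip_mulVec_le_concP hBP hlam (hψ i) (hA (ψ i) · · · (hψ i))
  rw [Complex.re_ofReal_mul]
  calc √(2 / (m * (m - 1))) * -(p i * (hip (ψ i) (W *ᵥ ψ i)).re)
      = p i * (√(2 / (m * (m - 1))) * -(hip (ψ i) (W *ᵥ ψ i)).re) := by ring
    _ ≤ p i * (lam * concP (ψ i)) := mul_le_mul_of_nonneg_left h (hp i)
    _ = lam * (p i * concP (ψ i)) := by ring

theorem stmt8_general {m : ℕ} (W : Matrix (Fin m × Fin m) (Fin m × Fin m) ℂ)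
    (hBP : BlockPos W)
    (lam : ℝ) (hlam : 0 < lam)
    (hA : ∀ (ψ : Fin m × Fin m → ℂ) (a b : Fin m → Fin m → ℂ) (μ : Fin m → ℝ),
      hip ψ ψ = 1 → IsSchmidt ψ a b μ → ∀ k l, k ≠ l → -lam ≤ Acoef W a b k l)
    (ρ : Matrix (Fin m × Fin m) (Fin m × Fin m) ℂ)
    (hρ : ρ.PosSemidef) (hρtr : ρ.trace = 1)
    (hdet : (Matrix.trace (ρ * W)).re < 0) :
    (∀ (N : ℕ) (p : Fin N → ℝ) (ψ : Fin N → (Fin m × Fin m → ℂ)),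
      (∀ i, 0 < p i) → ∑ i, p i = 1 → (∀ i, hip (ψ i) (ψ i) = 1) →
      ρ = ∑ i, (p i : ℂ) • Matrix.of (fun x y => ψ i x * conj (ψ i y)) →
      Real.sqrt (2 / ((m : ℝ) * ((m : ℝ) - 1)))
          * |(Matrix.trace (ρ * W)).re| / lam
        ≤ ∑ i, p i * concP (ψ i)) ∧
    Real.sqrt (2 / ((m : ℝ) * ((m : ℝ) - 1)))
        * |(Matrix.trace (ρ * W)).re| / lam
      ≤ concM ρ := by
  have hbound : ∀ (N : ℕ) (p : Fin N → ℝ) (ψ : Fin N → (Fin m × Fin m → ℂ)),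
      (∀ i, 0 < p i) → ∑ i, p i = 1 → (∀ i, hip (ψ i) (ψ i) = 1) →
      ρ = ∑ i, (p i : ℂ) • Matrix.of (fun x y => ψ i x * conj (ψ i y)) →
      √(2 / (m * (m - 1))) * |(trace (ρ * W)).re| / lam ≤ ∑ i, p i * concP (ψ i) := by
    intro N p ψ hp _ hψ hdec
    rw [abs_of_neg hdet, div_le_iff₀ hlam, mul_comm _ lam, hdec]
    exact sqrt_two_div_mul_neg_re_trace_mul_le hBP hlam.le hA (fun i => (hp i).le) hψ
  exact ⟨hbound, le_concM hρ hρtr hbound⟩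

/-- If `W` is a block positive Hermitian matrix with `A_{kl}^{(W)}(ψ) ≥ −λ`
(`λ > 0`) for every unit vector `ψ`, every Schmidt decomposition and all
`k ≠ l`, and `ρ` is a density matrix with `Tr(ρW) < 0`, then every pure-state
decomposition of `ρ` satisfies
`∑ᵢ pᵢ C(ψᵢ) ≥ √(2/(m(m−1))) |Tr(ρW)| / λ`, and hence
`C(ρ) ≥ √(2/(m(m−1))) |Tr(ρW)| / λ`. -/
theorem stmt8 {m : ℕ} (W : Matrix (Fin m × Fin m) (Fin m × Fin m) ℂ)
    (hW : W.IsHermitian) (hBP : BlockPos W)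
    (lam : ℝ) (hlam : 0 < lam)
    (hA : ∀ (ψ : Fin m × Fin m → ℂ) (a b : Fin m → Fin m → ℂ) (μ : Fin m → ℝ),
      hip ψ ψ = 1 → IsSchmidt ψ a b μ → ∀ k l, k ≠ l → -lam ≤ Acoef W a b k l)
    (ρ : Matrix (Fin m × Fin m) (Fin m × Fin m) ℂ)
    (hρ : ρ.PosSemidef) (hρtr : ρ.trace = 1)
    (hdet : (Matrix.trace (ρ * W)).re < 0) :
    (∀ (N : ℕ) (p : Fin N → ℝ) (ψ : Fin N → (Fin m × Fin m → ℂ)),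
      (∀ i, 0 < p i) → ∑ i, p i = 1 → (∀ i, hip (ψ i) (ψ i) = 1) →
      ρ = ∑ i, (p i : ℂ) • Matrix.of (fun x y => ψ i x * conj (ψ i y)) →
      Real.sqrt (2 / ((m : ℝ) * ((m : ℝ) - 1)))
          * |(Matrix.trace (ρ * W)).re| / lam
        ≤ ∑ i, p i * concP (ψ i)) ∧
    Real.sqrt (2 / ((m : ℝ) * ((m : ℝ) - 1)))
        * |(Matrix.trace (ρ * W)).re| / lam
      ≤ concM ρ :=
  stmt8_general W hBP lam hlam hA ρ hρ hρtr hdet
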